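/- For every integer e ≥ 1, the piano ring R̃e(k) is a W(k)-subalgebra of the power-series ring B(k)[[T]]: it contains the subring W(k)[[T]] (in particular the elements 1 and T) and is closed under addition, negation and multiplication. -/

import Mathlib

/-!
Piano rings (A. Vasiu, "Shimura varieties and the Mumford–Tate conjecture", §2.1).

`W(k)` is the ring of `p`-typical Witt vectors of a perfect field `k` of characteristic `p`,
`B(k) = W(k)[1/p]` its fraction field.  For `e ≥ 1`, the piano ring `R̃e(k)` of resonance `e`
consists of the power series `Σ aₙ Tⁿ ∈ B(k)[[T]]` with `aₙ ⬝ (⌊n/e⌋)! ∈ W(k)` for all `n`,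
and the piano ring `Re(k)` of convergent resonance `e` consists of those for which moreover
`bₙ := aₙ ⬝ (⌊n/e⌋)!` converges `p`-adically to `0`.
-/

noncomputable section

open PowerSeries

variable (p : ℕ) [Fact p.Prime] (k : Type*) [Field k] [CharP k p] [PerfectRing k p]

/-- `x` lies in the canonical image of `W(k)` inside `B(k)`. -/
def InW (x : FractionRing (WittVector p k)) : Prop :=
  ∃ w : WittVector p k,
    algebraMap (WittVector p k) (FractionRing (WittVector p k)) w = x

/-- The piano ring `R̃e(k)` of resonance `e`: power series `Σ aₙ Tⁿ` over `B(k)` with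
`aₙ ⬝ (⌊n/e⌋)! ∈ W(k)` for all `n`. -/
def pianoTilde (e : ℕ) : Set (PowerSeries (FractionRing (WittVector p k))) :=
  {f | ∀ n : ℕ,
    InW p k (PowerSeries.coeff n f * (Nat.factorial (n / e) : FractionRing (WittVector p k)))}

/-- The piano ring `Re(k)` of convergent resonance `e`: power series `Σ aₙ Tⁿ` over `B(k)`
with `bₙ := aₙ ⬝ (⌊n/e⌋)! ∈ W(k)` for all `n` and `bₙ → 0` `p`-adically
(for every `m` eventually `bₙ ∈ pᵐ W(k)`). -/
def pianoR (e : ℕ) : Set (PowerSeries (FractionRing (WittVector p k))) :=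
  {f | (∀ n : ℕ,
      InW p k (PowerSeries.coeff n f * (Nat.factorial (n / e) : FractionRing (WittVector p k)))) ∧
    ∀ m : ℕ, ∃ N : ℕ, ∀ n ≥ N, ∃ w : WittVector p k,
      algebraMap (WittVector p k) (FractionRing (WittVector p k)) ((p : WittVector p k) ^ m * w)
        = PowerSeries.coeff n f * (Nat.factorial (n / e) : FractionRing (WittVector p k))}

/-!
Since `⌊i/e⌋ + ⌊j/e⌋ ≤ ⌊(i+j)/e⌋` and binomial coefficients are integers, `⌊i/e⌋! ⌊j/e⌋!`
divides `⌊(i+j)/e⌋!`. Hence each term `aᵢ bⱼ ⌊n/e⌋!` of the Cauchy product is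
`(aᵢ ⌊i/e⌋!) (bⱼ ⌊j/e⌋!)` times an integer, which lies in `W(k)`; the other closure properties
hold coefficientwise.
-/

theorem Nat.factorial_div_mul_factorial_div_dvd (i j e : ℕ) :
    (i / e).factorial * (j / e).factorial ∣ ((i + j) / e).factorial :=
  (Nat.factorial_mul_factorial_dvd_factorial_add _ _).trans
    (Nat.factorial_dvd_factorial Nat.div_add_div_le_add_div)

namespace PowerSeries

variable {A : Type*} [CommRing A]

def weightedSubring (S : Subring A) (w : ℕ → ℕ) (hw : ∀ i j, w i * w j ∣ w (i + j)) :
    Subring A⟦X⟧ where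
  carrier := {f | ∀ n, coeff n f * w n ∈ S}
  zero_mem' n := by simp
  one_mem' n := by
    by_cases hn : n = 0 <;> simp [coeff_one, hn, natCast_mem]
  add_mem' {f g} hf hg n := by
    simpa only [map_add, add_mul] using S.add_mem (hf n) (hg n)
  neg_mem' {f} hf n := by
    simpa only [map_neg, neg_mul] using S.neg_mem (hf n)
  mul_mem' {f g} hf hg n := by
    rw [coeff_mul, Finset.sum_mul]
    refine S.sum_mem fun ⟨i, j⟩ hij => ?_
    obtain ⟨m, hm⟩ := hw i j
    rw [Finset.HasAntidiagonal.mem_antidiagonal.mp hij] at hm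
    have hterm : coeff i f * coeff j g * (w n : A) =
        coeff i f * w i * (coeff j g * w j) * m := by
      rw [hm]; push_cast; ring
    rw [hterm]
    exact S.mul_mem (S.mul_mem (hf i) (hg j)) (natCast_mem S m)

variable {S : Subring A} {w : ℕ → ℕ} {hw : ∀ i j, w i * w j ∣ w (i + j)}

theorem mem_weightedSubring_of_coeff_mem {f : A⟦X⟧} (hf : ∀ n, coeff n f ∈ S) :
    f ∈ weightedSubring S w hw :=
  fun n => S.mul_mem (hf n) (natCast_mem S _)

theorem map_mem_weightedSubring_range {R : Type*} [CommRing R] (φ : R →+* A) (g : R⟦X⟧) :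
    map φ g ∈ weightedSubring φ.range w hw :=
  mem_weightedSubring_of_coeff_mem fun n => by
    rw [coeff_map]
    exact φ.mem_range_self _

end PowerSeries

theorem pianoTilde_eq_weightedSubring (e : ℕ) :
    pianoTilde p k e =
      weightedSubring (algebraMap (WittVector p k) (FractionRing (WittVector p k))).range
        (fun n => (n / e).factorial) (fun i j => Nat.factorial_div_mul_factorial_div_dvd i j e) :=
  rfl

theorem pianoTilde_isSubalgebra (e : ℕ) :
    (∀ g : PowerSeries (WittVector p k),
      PowerSeries.map (algebraMap (WittVector p k) (FractionRing (WittVector p k))) g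
        ∈ pianoTilde p k e) ∧
    (1 : PowerSeries (FractionRing (WittVector p k))) ∈ pianoTilde p k e ∧
    (PowerSeries.X : PowerSeries (FractionRing (WittVector p k))) ∈ pianoTilde p k e ∧
    (∀ f ∈ pianoTilde p k e, ∀ g ∈ pianoTilde p k e, f + g ∈ pianoTilde p k e) ∧
    (∀ f ∈ pianoTilde p k e, -f ∈ pianoTilde p k e) ∧
    (∀ f ∈ pianoTilde p k e, ∀ g ∈ pianoTilde p k e, f * g ∈ pianoTilde p k e) := by
  simp only [pianoTilde_eq_weightedSubring, SetLike.mem_coe]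
  refine ⟨map_mem_weightedSubring_range _, one_mem _, ?_,
    fun _ hf _ hg => add_mem hf hg, fun _ hf => neg_mem hf, fun _ hf _ hg => mul_mem hf hg⟩
  rw [← map_X (algebraMap (WittVector p k) (FractionRing (WittVector p k)))]
  exact map_mem_weightedSubring_range _ _
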